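/- arXiv:1509.02102 — 4 statements merged into one kernel-verified Lean document; each statement's English description precedes it below -/
import Mathlib

section
/- Let E > 1 and α ≥ 0. For u ∈ (0,1), the unique solution h(u) of (1-u)(1+E*h*u)² = E*(1 + E*h*u + E*α*u) (in h > 0) is given explicitly by h(u) = (1/(E*u*(1-u))) * ( (E/2)*(1 + sqrt(1 + 4*α*u*(1-u))) + u - 1 ). -/
/-!
With `w = 1 + E h u` the equation becomes the quadratic `(1 - u) w² - E w - E² α u = 0`, whose
discriminant is `(E s)²` for `s = √(1 + 4 α u (1 - u)) ≥ 1`. Its roots are `E (1 ± s) / (2 (1 - u))`: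
the smaller one is `≤ 0`, while `h > 0` forces `w > 1`, and the larger one exceeds `1` because
`E > 1`. Solving `w = E (1 + s) / (2 (1 - u))` for `h` gives the formula.
-/

open Real

lemma one_sub_mul_sq_eq_iff {E α u s : ℝ} (hu : u ≠ 1) (hs : s ^ 2 = 1 + 4 * α * u * (1 - u))
    (w : ℝ) :
    (1 - u) * w ^ 2 = E * (w + E * α * u) ↔
      w = (E + E * s) / (2 * (1 - u)) ∨ w = (E - E * s) / (2 * (1 - u)) := by
  have hdiscrim : discrim (1 - u) (-E) (-(E ^ 2 * α * u)) = (E * s) * (E * s) := by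
    rw [discrim]
    linear_combination (-E ^ 2) * hs
  have hroots := quadratic_eq_zero_iff (sub_ne_zero.mpr hu.symm) hdiscrim w
  rw [neg_neg] at hroots
  rw [← hroots]
  constructor <;> intro h <;> linear_combination h

lemma one_le_one_add_mul_mul_one_sub {α u : ℝ} (hα : 0 ≤ α) (hu : u ∈ Set.Icc (0 : ℝ) 1) :
    1 ≤ 1 + 4 * α * u * (1 - u) := by
  have := hu.1; have := sub_nonneg.mpr hu.2
  have : 0 ≤ α * u * (1 - u) := by positivity
  linarith

theorem stmt_3 (E α u : ℝ) (hE : 1 < E) (hα : 0 ≤ α) (hu : u ∈ Set.Ioo (0:ℝ) 1)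
    (hval : ℝ)
    (hdef : hval = (1/(E*u*(1-u))) * ((E/2) * (1 + Real.sqrt (1 + 4*α*u*(1-u))) + u - 1)) :
    0 < hval ∧ (1-u) * (1+E*hval*u)^2 = E * (1 + E*hval*u + E*α*u) ∧
      ∀ h : ℝ, 0 < h → (1-u) * (1+E*h*u)^2 = E * (1 + E*h*u + E*α*u) → h = hval := by
  obtain ⟨hu0, hu1⟩ := hu
  set s := √(1 + 4 * α * u * (1 - u))
  have harg := one_le_one_add_mul_mul_one_sub hα ⟨hu0.le, hu1.le⟩
  have hs1 : 1 ≤ s := one_le_sqrt.mpr harg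
  have hs : s ^ 2 = 1 + 4 * α * u * (1 - u) := sq_sqrt (by linarith)
  have h1u : 0 < 1 - u := sub_pos.mpr hu1
  have hEu : 0 < E * u := by positivity
  have hquad := one_sub_mul_sq_eq_iff (E := E) hu1.ne hs
  have hw : 1 + E * hval * u = (E + E * s) / (2 * (1 - u)) := by
    rw [hdef]; field_simp; ring
  have hw1 : 1 < 1 + E * hval * u := by
    rw [hw, lt_div_iff₀ (by positivity)]; nlinarith
  have hsmall : (E - E * s) / (2 * (1 - u)) ≤ 0 :=
    div_nonpos_of_nonpos_of_nonneg (by nlinarith) (by positivity)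
  refine ⟨pos_of_mul_pos_left (by linarith) hEu.le, ?_, fun h hh heq => ?_⟩
  · exact (hquad _).mpr (.inl hw)
  · have hwh : 1 < 1 + E * h * u := by linarith [mul_pos hEu hh]
    rcases (hquad _).mp heq with hroot | hroot
    · exact mul_left_cancel₀ hEu.ne' (by linear_combination hroot - hw)
    · linarith
end

section
/- Let α ≥ 0 and consider P(h,u) = u*( h²*u² + h*(2-h)*u + α + 1 - h ) for h > 0. The minimal h > 0 such that P(h,·) admits a multiple root in [0,1) equals 1 + α if α ≤ 1, and equals 2*sqrt(α) if α > 1. -/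
/-!
Write `P h u = u * Q h u` with `Q h` quadratic. A multiple root at `u = 0` means `Q h 0 = 0`, i.e.
`h = 1 + α`. A multiple root at `u ≠ 0` is a double root of `Q h`: the discriminant
`h² (h² - 4α)` vanishes and the root is `(h - 2) / (2h)`, which lies in `(0, 1)` exactly when
`h > 2`, i.e. `h = 2√α` with `α > 1`. The admissible `h` are therefore `1 + α` and, for `α > 1`,
also `2√α ≤ 1 + α`.
-/

open Set

lemma deriv_mul_quadratic (a b c u : ℝ) :
    deriv (fun u : ℝ => u * (a * u ^ 2 + b * u + c)) u = 3 * a * u ^ 2 + 2 * b * u + c := by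
  have hq : HasDerivAt (fun u : ℝ => a * u ^ 2 + b * u + c) (a * (2 * u) + b) u := by
    simpa using (((hasDerivAt_pow 2 u).const_mul a).add ((hasDerivAt_id u).const_mul b)).add_const c
  rw [((hasDerivAt_id' u).fun_mul hq).deriv]
  ring

lemma double_root_iff_of_ne_zero {α h u : ℝ} (hh : h ≠ 0) (hu : u ≠ 0) :
    (u * (h ^ 2 * u ^ 2 + h * (2 - h) * u + α + 1 - h) = 0 ∧
        3 * h ^ 2 * u ^ 2 + 2 * (h * (2 - h)) * u + (α + 1 - h) = 0) ↔
      2 * h * u = h - 2 ∧ h ^ 2 = 4 * α := by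
  constructor
  · rintro ⟨hP, hD⟩
    have hQ : h ^ 2 * u ^ 2 + h * (2 - h) * u + α + 1 - h = 0 :=
      (mul_eq_zero.mp hP).resolve_left hu
    -- `Q' - Q = h u (2 h u - (h - 2))`
    have hroot : 2 * h * u = h - 2 := by
      have : h * u * (2 * h * u - (h - 2)) = 0 := by linear_combination hD - hQ
      rcases mul_eq_zero.mp this with h0 | h0
      · exact absurd h0 (mul_ne_zero hh hu)
      · linarith
    exact ⟨hroot, by linear_combination (-4) * hQ + (2 * h * u + 2 - h) * hroot⟩
  · rintro ⟨hroot, hsq⟩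
    have hQ : h ^ 2 * u ^ 2 + h * (2 - h) * u + α + 1 - h = 0 := by
      linear_combination (2 * h * u - h + 2) / 4 * hroot - hsq / 4
    refine ⟨by rw [hQ, mul_zero], ?_⟩
    linear_combination hQ + h * u * hroot

lemma has_multiple_root_iff (α h : ℝ) :
    (0 < h ∧ ∃ u ∈ Ico (0 : ℝ) 1, u * (h ^ 2 * u ^ 2 + h * (2 - h) * u + α + 1 - h) = 0 ∧
        3 * h ^ 2 * u ^ 2 + 2 * (h * (2 - h)) * u + (α + 1 - h) = 0) ↔
      (0 < h ∧ h = 1 + α) ∨ (2 < h ∧ h ^ 2 = 4 * α) := by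
  constructor
  · rintro ⟨hh, u, ⟨hu0, -⟩, hP, hD⟩
    rcases hu0.eq_or_lt with rfl | hu
    · exact Or.inl ⟨hh, by linarith⟩
    · obtain ⟨hroot, hsq⟩ := (double_root_iff_of_ne_zero hh.ne' hu.ne').mp ⟨hP, hD⟩
      exact Or.inr ⟨by nlinarith [mul_pos hh hu], hsq⟩
  · rintro (⟨hh, rfl⟩ | ⟨hh, hsq⟩)
    · exact ⟨hh, 0, ⟨le_rfl, one_pos⟩, by ring, by ring⟩
    · have hh0 : 0 < 2 * h := by linarith
      refine ⟨by linarith, (h - 2) / (2 * h), ⟨by positivity, ?_⟩, ?_⟩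
      · rw [div_lt_one hh0]; linarith
      · refine (double_root_iff_of_ne_zero (by positivity) (by positivity)).mpr ⟨?_, hsq⟩
        field_simp

lemma isLeast_multiple_root_params {α : ℝ} (hα : 0 ≤ α) :
    IsLeast {h : ℝ | (0 < h ∧ h = 1 + α) ∨ (2 < h ∧ h ^ 2 = 4 * α)}
      (if α ≤ 1 then 1 + α else 2 * Real.sqrt α) := by
  split_ifs with hα1
  · refine ⟨Or.inl ⟨by linarith, rfl⟩, ?_⟩
    rintro h (⟨-, rfl⟩ | ⟨h2, hsq⟩)
    · exact le_rfl
    · nlinarith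
  · have hs : Real.sqrt α ^ 2 = α := Real.sq_sqrt hα
    have hs1 : 1 < Real.sqrt α := by rw [Real.lt_sqrt zero_le_one]; linarith
    refine ⟨Or.inr ⟨by linarith, by rw [mul_pow, hs]; ring⟩, ?_⟩
    rintro h (⟨-, rfl⟩ | ⟨h2, hsq⟩)
    · nlinarith [sq_nonneg (Real.sqrt α - 1)]
    · nlinarith

theorem stmt_7 (α : ℝ) (hα : 0 ≤ α)
    (P : ℝ → ℝ → ℝ)
    (hP : ∀ h u : ℝ, P h u = u * (h^2*u^2 + h*(2-h)*u + α + 1 - h)) :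
    IsLeast {h : ℝ | 0 < h ∧ ∃ u ∈ Set.Ico (0:ℝ) 1, P h u = 0 ∧ deriv (P h) u = 0}
      (if α ≤ 1 then 1 + α else 2 * Real.sqrt α) := by
  have hderiv : ∀ h u : ℝ, deriv (P h) u
      = 3 * h ^ 2 * u ^ 2 + 2 * (h * (2 - h)) * u + (α + 1 - h) := by
    intro h u
    rw [show P h = fun u => u * (h ^ 2 * u ^ 2 + h * (2 - h) * u + (α + 1 - h)) from
      funext fun v => by rw [hP]; ring, deriv_mul_quadratic]
  have hset : {h : ℝ | 0 < h ∧ ∃ u ∈ Set.Ico (0:ℝ) 1, P h u = 0 ∧ deriv (P h) u = 0} =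
      {h : ℝ | (0 < h ∧ h = 1 + α) ∨ (2 < h ∧ h ^ 2 = 4 * α)} := by
    ext h
    simp only [mem_ofPred_eq, hP, hderiv]
    exact has_multiple_root_iff α h
  rw [hset]
  exact isLeast_multiple_root_params hα
end

section
/- Let E > 1, h > 0 and u > 0, and set z = E*h*u. Then the partial derivative of W(E,h,u) = u²/2 - u³/3 - u/h + (1/(E*h²))*ln(1+E*h*u) with respect to h equals (1/(E*h³)) * ( z - 2*ln(1+z) + z/(1+z) ), and this quantity is strictly positive. -/
open Real

/-- `log x < sinh (log x) = (x - x⁻¹) / 2` once `log x > 0`. -/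
lemma two_mul_log_lt_sub_inv {x : ℝ} (hx : 1 < x) : 2 * log x < x - x⁻¹ := by
  have h := self_lt_sinh_iff.mpr (log_pos hx)
  rw [sinh_log (zero_lt_one.trans hx)] at h
  linarith

lemma sub_two_mul_log_one_add_add_div_pos {z : ℝ} (hz : 0 < z) :
    0 < z - 2 * log (1 + z) + z / (1 + z) := by
  have h := two_mul_log_lt_sub_inv (lt_add_of_pos_right 1 hz)
  have hsplit : 1 + z - (1 + z)⁻¹ = z + z / (1 + z) := by
    field_simp
    ring
  linarith

lemma hasDerivAt_potential_param {E h u : ℝ} (hE : E ≠ 0) (hh : h ≠ 0)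
    (hlog : 1 + E * h * u ≠ 0) :
    HasDerivAt (fun t : ℝ => u^2/2 - u^3/3 - u/t + (1/(E*t^2)) * log (1 + E*t*u))
      ((1/(E*h^3)) * (E*h*u - 2*log (1 + E*h*u) + E*h*u/(1 + E*h*u))) h := by
  have hrecip : HasDerivAt (fun t : ℝ => u / t) (-(u / h^2)) h := by
    simpa [div_eq_mul_inv] using (hasDerivAt_inv hh).const_mul u
  have hcoeff : HasDerivAt (fun t : ℝ => 1 / (E*t^2)) (-(2 / (E*h^3))) h := by
    have := ((hasDerivAt_pow 2 h).const_mul E).inv (by positivity)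
    refine (this.congr_deriv ?_).congr_of_eventuallyEq (.of_forall fun t => one_div _)
    norm_num
    field_simp
  have hlin : HasDerivAt (fun t : ℝ => 1 + E*t*u) (E*u) h := by
    simpa using ((hasDerivAt_id h).const_mul E |>.mul_const u).const_add 1
  have hall := ((hasDerivAt_const h (u^2/2 - u^3/3)).sub hrecip).add (hcoeff.mul (hlin.log hlog))
  refine hall.congr_deriv ?_
  field_simp
  ring

theorem stmt_11 (E h u z : ℝ) (hE : 1 < E) (hh : 0 < h) (hu : 0 < u)
    (hz : z = E*h*u) :
    HasDerivAt (fun t : ℝ => u^2/2 - u^3/3 - u/t + (1/(E*t^2)) * Real.log (1 + E*t*u))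
      ((1/(E*h^3)) * (z - 2*Real.log (1+z) + z/(1+z))) h ∧
    0 < (1/(E*h^3)) * (z - 2*Real.log (1+z) + z/(1+z)) := by
  subst hz
  have hE0 : 0 < E := zero_lt_one.trans hE
  have hz0 : 0 < E * h * u := by positivity
  refine ⟨hasDerivAt_potential_param hE0.ne' hh.ne' (by positivity), ?_⟩
  have := sub_two_mul_log_one_add_add_div_pos hz0
  positivity
end

section
/- Define g(E) = W(E, h₁(E), u⁺(E,h₁(E))) for E > 1, where W(E,h,u) = u²/2 - u³/3 - u/h + (1/(E*h²))*ln(1+E*h*u), h₁(E) = (1/E)*(2E-1+2*sqrt(E*(E-1))) and u⁺(E,h₁(E)) = 1 - E + sqrt(E*(E-1)). Then g(E) < 0 for every E > 1. -/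
/-!
The logarithm is bounded above by its `[2/1]` Padé approximant,
`log (1 + z) ≤ z (6 + z) / (6 + 4 z)` for `z ≥ 0`. Substituting this bound into `W` leaves
`u² (1/2 - u/3 - 3E/(6 + 4z))` with `z = E h u`. At `h = h₁(E)`, `u = u⁺` we have
`z = s + E - 1` and `u = s - (E - 1)` with `s = √(E(E-1))`, so
`(3 - 2u)(6 + 4z) = 2((1 + 2E)² - 4s²) = 2 + 16E`, and the bracket collapses to
`(1 - E) / (3 (6 + 4z))`, which is negative for `E > 1`.
-/

open Real

lemma hasDerivAt_pade_sub_log {x : ℝ} (hx : -1 < x) :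
    HasDerivAt (fun x => x * (6 + x) / (6 + 4 * x) - log (1 + x))
      (x ^ 3 / ((1 + x) * (3 + 2 * x) ^ 2)) x := by
  have hden : 6 + 4 * x ≠ 0 := by linarith
  have hx1 : 1 + x ≠ 0 := by linarith
  refine ((((hasDerivAt_id' x).fun_mul ((hasDerivAt_id' x).const_add 6)).fun_div
    (((hasDerivAt_id' x).const_mul 4).const_add 6) hden).sub
    (((hasDerivAt_id' x).const_add 1).log hx1)).congr_deriv ?_
  have h32 : 3 + 2 * x ≠ 0 := by linarith
  rw [div_sub_div _ _ (pow_ne_zero 2 hden) hx1,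
    div_eq_div_iff (mul_ne_zero (pow_ne_zero 2 hden) hx1) (mul_ne_zero hx1 (pow_ne_zero 2 h32))]
  ring

lemma log_one_add_le_pade {z : ℝ} (hz : 0 ≤ z) :
    log (1 + z) ≤ z * (6 + z) / (6 + 4 * z) := by
  have hderiv : ∀ x ∈ Set.Ici (0 : ℝ), HasDerivAt _ _ x :=
    fun x hx => hasDerivAt_pade_sub_log (by linarith [Set.mem_Ici.mp hx])
  have hmono := monotoneOn_of_hasDerivWithinAt_nonneg (convex_Ici 0)
    (fun x hx => (hderiv x hx).continuousAt.continuousWithinAt)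
    (fun x hx => (hderiv x (interior_subset hx)).hasDerivWithinAt)
    (fun x hx => by
      rw [interior_Ici, Set.mem_Ioi] at hx
      positivity)
  simpa [sub_nonneg] using hmono Set.self_mem_Ici (Set.mem_Ici.mpr hz) hz

/-- The potential `W(E, h, u)` of the reaction term `u (1 - u) - E u / (1 + E h u)`. -/
noncomputable def potential (E h u : ℝ) : ℝ :=
  u ^ 2 / 2 - u ^ 3 / 3 - u / h + (1 / (E * h ^ 2)) * log (1 + E * h * u)

lemma potential_le_pade {E h u : ℝ} (hE : 0 < E) (hh : 0 < h) (hu : 0 ≤ u) :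
    potential E h u ≤ u ^ 2 * (1 / 2 - u / 3 - 3 * E / (6 + 4 * (E * h * u))) := by
  have hlog := log_one_add_le_pade (by positivity : 0 ≤ E * h * u)
  calc potential E h u
      ≤ u ^ 2 / 2 - u ^ 3 / 3 - u / h +
          (1 / (E * h ^ 2)) * (E * h * u * (6 + E * h * u) / (6 + 4 * (E * h * u))) := by
        unfold potential
        gcongr
    _ = u ^ 2 * (1 / 2 - u / 3 - 3 * E / (6 + 4 * (E * h * u))) := by
        field_simp
        ring

theorem stmt_13 (E : ℝ) (hE : 1 < E)
    (h₁ u g : ℝ)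
    (hh₁ : h₁ = (1/E) * (2*E - 1 + 2*Real.sqrt (E*(E-1))))
    (hu : u = 1 - E + Real.sqrt (E*(E-1)))
    (hg : g = u^2/2 - u^3/3 - u/h₁ + (1/(E*h₁^2)) * Real.log (1 + E*h₁*u)) :
    g < 0 := by
  have hE0 : 0 < E := by linarith
  set s := √(E * (E - 1))
  have hs : s ^ 2 = E * (E - 1) := sq_sqrt (by nlinarith)
  have hs_gt : E - 1 < s := (lt_sqrt (by linarith)).mpr (by nlinarith)
  have hu_pos : 0 < u := by rw [hu]; linarith
  have hh_pos : 0 < h₁ := by rw [hh₁]; exact mul_pos (by positivity) (by linarith)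
  have hz : E * h₁ * u = s + (E - 1) := by
    rw [hh₁, hu]
    field_simp
    linear_combination 2 * hs
  have hbracket : 1 / 2 - u / 3 - 3 * E / (6 + 4 * (E * h₁ * u))
      = (1 - E) / (3 * (6 + 4 * (E * h₁ * u))) := by
    have hden : 6 + 4 * (s + (E - 1)) ≠ 0 := by linarith
    rw [hz]
    field_simp
    rw [hu]
    linear_combination (-8) * hs
  calc g = potential E h₁ u := hg
    _ ≤ u ^ 2 * ((1 - E) / (3 * (6 + 4 * (E * h₁ * u)))) :=
        hbracket ▸ potential_le_pade hE0 hh_pos hu_pos.le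
    _ < 0 := mul_neg_of_pos_of_neg (by positivity)
        (div_neg_of_neg_of_pos (by linarith) (by positivity))
end
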